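/- arXiv:2206.13149 — 2 statements merged into one kernel-verified Lean document; each statement's English description precedes it below -/
import Mathlib

section
/- For every positive-definite Hermitian inner product h on 𝔤^{1,0} and every h-orthonormal basis {X_1,…,X_{r+s}} of 𝔤^{1,0}, the associated Chern-Ricci form satisfies: ρ_C(X,Y) = 0 whenever X ∈ 𝔍 or Y ∈ 𝔍; ρ_C(Z_i, Z̄_j) = 0 for all i ≠ j; and ρ_C(Z_i, Z̄_i) = −√−1·( 1/2 − Σ_{a=1}^{s} Im λ_a(Z_i) ) for every i = 1,…,r. In particular ρ_C does not depend on the choice of the Hermitian metric h. -/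
open Complex

/-!
Split `⁅X, Y⁆ = u + w` along `𝔤^{1,0} ⊕ 𝔤^{0,1}`. If `X` or `Y` lies in the ideal `𝔍`, then
`u ∈ 𝔍^{1,0}` and `w ∈ 𝔍^{0,1}`. By (ii) and (iv), `ad w` maps `𝔤^{1,0}` into `𝔍^{0,1}` and
`ad u` maps `𝔤^{0,1}` into `𝔍^{1,0}`, so each term of `ρ_C` pairs two vectors of the same type
under `ω` and vanishes.

For `ρ_C(Z_i, Z̄_i)` we have `u = -(√-1/2) Z_i`, `w = -(√-1/2) Z̄_i`. Let `T` be the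
`(1,0)`-part of `ad Z̄_i` on `𝔤^{1,0}`. Via `σ` and the hermitian symmetry of `h`, the `a`-th term
becomes `√-1 · Im h(T X_a, X_a)`. As `T` takes values in `𝔤^{1,0}` and `X` is `h`-orthonormal,
`Σ_a h(T X_a, X_a) = tr T`, so `ρ_C(Z_i, Z̄_i) = -√-1 · Im tr T`. The trace can be read off
in the basis `Z, W`, where `T` is diagonal with eigenvalues `√-1/2` (at `Z_i`), `0`, and
`conj λ_a(Z_i)`.
-/

open Submodule

section Lie
variable {R L : Type*} [CommRing R] [LieRing L] [LieAlgebra R L]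

theorem lie_mem_of_mem_span {s t : Set L} {P : Submodule R L}
    (hst : ∀ x ∈ s, ∀ y ∈ t, ⁅x, y⁆ ∈ P) {x y : L} (hx : x ∈ span R s) (hy : y ∈ span R t) :
    ⁅x, y⁆ ∈ P := by
  have hle : map₂ (LieModule.toEnd R L L : L →ₗ[R] L →ₗ[R] L) (span R s) (span R t) ≤ P := by
    rw [map₂_span_span, span_le]
    rintro _ ⟨x, hx, y, hy, rfl⟩
    exact hst x hx y hy
  exact hle (apply_mem_map₂ _ hx hy)

theorem lie_mem_of_mem_left_or_right {J : Submodule R L} (hJ : ∀ x : L, ∀ y ∈ J, ⁅x, y⁆ ∈ J)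
    {x y : L} (hxy : x ∈ J ∨ y ∈ J) : ⁅x, y⁆ ∈ J := by
  rcases hxy with hx | hy
  · rw [← lie_skew]
    exact neg_mem (hJ y x hx)
  · exact hJ x y hy

theorem lie_mem_span_of_weight {ι κ : Type*} {A : ι → L} {B C : κ → L} (μ : κ → ι → R)
    (hAC : ∀ k b, ⁅A k, C b⁆ = μ b k • C b) (hCB : ∀ b a, ⁅C b, B a⁆ = 0) {T : Set L}
    {w x : L} (hw : w ∈ span R (Set.range C)) (hx : x ∈ span R (Set.range A ∪ Set.range B)) :
    ⁅w, x⁆ ∈ span R (T ∪ Set.range C) := by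
  refine lie_mem_of_mem_span ?_ hw hx
  rintro _ ⟨b, rfl⟩ _ (⟨k, rfl⟩ | ⟨a, rfl⟩)
  · rw [← lie_skew, hAC]
    exact neg_mem (smul_mem _ _ (subset_span (Or.inr ⟨b, rfl⟩)))
  · rw [hCB]
    exact zero_mem _

end Lie

section Span
variable {R R₂ M M₂ : Type*} [Semiring R] [Semiring R₂] [AddCommMonoid M] [AddCommMonoid M₂]
  [Module R M] [Module R₂ M₂] {τ : R →+* R₂} [RingHomSurjective τ]

theorem Submodule.map_mem_span_of_mapsTo (f : M →ₛₗ[τ] M₂) {s : Set M} {t : Set M₂}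
    (hst : Set.MapsTo f s t) {x : M} (hx : x ∈ span R s) : f x ∈ span R₂ t :=
  (map_span_le f s (span R₂ t)).2 (fun _ hy => subset_span (hst hy)) (mem_map_of_mem hx)

theorem Submodule.map_mem_span_union_of_map_eq {ι κ : Type*} (f : M →ₛₗ[τ] M₂) {A : ι → M}
    {A' : ι → M₂} {B : κ → M} {B' : κ → M₂} (hA : ∀ k, f (A k) = A' k)
    (hB : ∀ a, f (B a) = B' a) {x : M} (hx : x ∈ span R (Set.range A ∪ Set.range B)) :
    f x ∈ span R₂ (Set.range A' ∪ Set.range B') := by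
  refine map_mem_span_of_mapsTo f ?_ hx
  rintro _ (⟨k, rfl⟩ | ⟨a, rfl⟩)
  exacts [Or.inl ⟨k, (hA k).symm⟩, Or.inr ⟨a, (hB a).symm⟩]

end Span

theorem Submodule.eq_and_eq_of_add_eq_add {R M : Type*} [Ring R] [AddCommGroup M] [Module R M]
    {P Q : Submodule R M} (hPQ : Disjoint P Q) {a a' b b' : M} (ha : a ∈ P) (ha' : a' ∈ P)
    (hb : b ∈ Q) (hb' : b' ∈ Q) (h : a + b = a' + b') : a = a' ∧ b = b' := by
  have hsub : a - a' = b' - b := by rw [sub_eq_sub_iff_add_eq_add, h, add_comm]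
  have h0 : a - a' = 0 := disjoint_def.mp hPQ _ (sub_mem ha ha') (hsub ▸ sub_mem hb' hb)
  exact ⟨sub_eq_zero.mp h0, (sub_eq_zero.mp (hsub ▸ h0)).symm⟩

theorem Module.Basis.disjoint_span_range_comp {ι α β R M : Type*} [Ring R] [AddCommGroup M]
    [Module R M] (b : Module.Basis ι R M) {f : α → ι} {g : β → ι}
    (hfg : Disjoint (Set.range f) (Set.range g)) :
    Disjoint (span R (Set.range (b ∘ f))) (span R (Set.range (b ∘ g))) := by
  rw [Set.range_comp, Set.range_comp]
  exact b.linearIndependent.disjoint_span_image hfg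

section Orthonormal
variable {K M ι : Type*} [Field K] [AddCommGroup M] [Module K M] {τ : K →+* K}
  [Fintype ι] [DecidableEq ι] (B : M →ₗ[K] M →ₛₗ[τ] K) {v : ι → M}

theorem apply_sum_smul_of_orthonormal (hv : ∀ i j, B (v i) (v j) = if i = j then 1 else 0)
    (c : ι → K) (j : ι) : B (∑ i, c i • v i) (v j) = c j := by
  simp [hv]

theorem linearIndependent_of_orthonormal (hv : ∀ i j, B (v i) (v j) = if i = j then 1 else 0) :
    LinearIndependent K v :=
  Fintype.linearIndependent_iff.mpr fun c hc j => by
    rw [← apply_sum_smul_of_orthonormal B hv c j, hc, map_zero, LinearMap.zero_apply]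

theorem trace_eq_sum_of_orthonormal [FiniteDimensional K M]
    (hv : ∀ i j, B (v i) (v j) = if i = j then 1 else 0) (f : M →ₗ[K] M)
    (hf : ∀ x, f x ∈ span K (Set.range v)) :
    LinearMap.trace K M f = ∑ i, B (f (v i)) (v i) := by
  set b := Module.Basis.span (linearIndependent_of_orthonormal B hv)
  rw [← LinearMap.trace_restrict_eq_of_forall_mem _ f hf, LinearMap.trace_eq_matrix_trace K b]
  refine Finset.sum_congr rfl fun i _ => ?_
  have hrepr : ∀ y : span K (Set.range v), b.repr y i = B y (v i) := fun y => by
    conv_rhs => rw [← b.sum_repr y]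
    simp only [Submodule.coe_sum, Submodule.coe_smul, b, Module.Basis.span_apply]
    rw [apply_sum_smul_of_orthonormal B hv]
  rw [Matrix.diag, LinearMap.toMatrix_apply, hrepr]
  simp [b, Module.Basis.span_apply]

end Orthonormal

section Diagonal
variable {ι R M : Type*} [Fintype ι] [DecidableEq ι] [CommRing R] [AddCommGroup M] [Module R M]
  (b : Module.Basis ι R M) (d : ι → R)

theorem Matrix.toLin_diagonal_self (j : ι) :
    Matrix.toLin b b (Matrix.diagonal d) (b j) = d j • b j := by
  simp [Matrix.toLin_self, Matrix.diagonal_apply]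

theorem Matrix.trace_toLin_diagonal :
    LinearMap.trace R M (Matrix.toLin b b (Matrix.diagonal d)) = ∑ j, d j := by
  rw [LinearMap.trace_eq_matrix_trace R b, LinearMap.toMatrix_toLin, Matrix.trace_diagonal]

end Diagonal

section Hermitian
variable {L : Type*} [LieRing L] [LieAlgebra ℂ L] {P Q : Submodule ℂ L}
  {σ : L →ₛₗ[starRingEnd ℂ] L} {h : L →ₗ[ℂ] L →ₛₗ[starRingEnd ℂ] ℂ} {ω : L →ₗ[ℂ] L →ₗ[ℂ] ℂ}
  {ι : Type*} [Fintype ι] {X : ι → L}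

theorem sum_omega_lie_eq_zero (hωP : ∀ x ∈ P, ∀ y ∈ P, ω x y = 0)
    (hωQ : ∀ x ∈ Q, ∀ y ∈ Q, ω x y = 0) (hσP : ∀ x ∈ P, σ x ∈ Q) (hX : ∀ a, X a ∈ P) {u w : L}
    (hu : ∀ x ∈ Q, ⁅u, x⁆ ∈ P) (hw : ∀ x ∈ P, ⁅w, x⁆ ∈ Q) :
    ∑ a, (ω ⁅w, X a⁆ (σ (X a)) + ω ⁅u, σ (X a)⁆ (X a)) = 0 :=
  Finset.sum_eq_zero fun a _ => by
    rw [hωQ _ (hw _ (hX a)) _ (hσP _ (hX a)), hωP _ (hu _ (hσP _ (hX a))) _ (hX a), add_zero]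

theorem omega_lie_add_omega_lie_conj (hωalt : ω.IsAlt)
    (hωP : ∀ x ∈ P, ∀ y ∈ P, ω x y = 0) (hωQ : ∀ x ∈ Q, ∀ y ∈ Q, ω x y = 0)
    (hωh : ∀ x ∈ P, ∀ y ∈ P, ω x (σ y) = I * h x y)
    (hherm : ∀ x ∈ P, ∀ y ∈ P, h x y = starRingEnd ℂ (h y x))
    (hσbr : ∀ x y : L, σ ⁅x, y⁆ = ⁅σ x, σ y⁆)
    (hσP : ∀ x ∈ P, σ x ∈ Q) (hσQ : ∀ x ∈ Q, σ x ∈ P)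
    {z x t : L} (hx : x ∈ P) (ht : t ∈ P) (hzx : ⁅z, x⁆ - t ∈ Q) :
    ω ⁅z, x⁆ (σ x) + ω ⁅σ z, σ x⁆ x = -(2 * (h t x).im : ℝ) := by
  set y := ⁅z, x⁆ - t
  have hzx' : ⁅z, x⁆ = t + y := (add_sub_cancel t _).symm
  have hσt : ω (σ t) x = -(I * starRingEnd ℂ (h t x)) := by
    rw [← hωalt.neg, hωh x hx t ht, hherm x hx t ht]
  rw [← hσbr, hzx', map_add, map_add, map_add, LinearMap.add_apply, LinearMap.add_apply,
    hωQ y hzx _ (hσP x hx), hωP _ (hσQ y hzx) x hx, hωh t ht x hx, hσt]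
  linear_combination I * sub_conj (h t x) + ((2 * (h t x).im : ℝ) : ℂ) * I_sq

theorem sum_omega_lie_add_omega_lie_conj [FiniteDimensional ℂ L] [DecidableEq ι]
    (hωalt : ω.IsAlt)
    (hωP : ∀ x ∈ P, ∀ y ∈ P, ω x y = 0) (hωQ : ∀ x ∈ Q, ∀ y ∈ Q, ω x y = 0)
    (hωh : ∀ x ∈ P, ∀ y ∈ P, ω x (σ y) = I * h x y)
    (hherm : ∀ x ∈ P, ∀ y ∈ P, h x y = starRingEnd ℂ (h y x))
    (hσbr : ∀ x y : L, σ ⁅x, y⁆ = ⁅σ x, σ y⁆)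
    (hσP : ∀ x ∈ P, σ x ∈ Q) (hσQ : ∀ x ∈ Q, σ x ∈ P)
    (hXon : ∀ a b, h (X a) (X b) = if a = b then 1 else 0) (hXspan : span ℂ (Set.range X) = P)
    {z : L} {T : L →ₗ[ℂ] L} (hTP : ∀ x, T x ∈ P) (hzT : ∀ x ∈ P, ⁅z, x⁆ - T x ∈ Q) :
    ∑ a, (ω ⁅z, X a⁆ (σ (X a)) + ω ⁅σ z, σ (X a)⁆ (X a)) =
      -(2 * (LinearMap.trace ℂ L T).im : ℝ) := by
  have hX : ∀ a, X a ∈ P := fun a => hXspan ▸ subset_span ⟨a, rfl⟩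
  rw [trace_eq_sum_of_orthonormal h hXon T (hXspan ▸ hTP), im_sum, Finset.mul_sum, ofReal_sum,
    ← Finset.sum_neg_distrib]
  exact Finset.sum_congr rfl fun a _ => omega_lie_add_omega_lie_conj hωalt hωP hωQ hωh hherm
    hσbr hσP hσQ (hX a) (hTP _) (hzT _ (hX a))

end Hermitian

section Setting
variable {r s : ℕ} {L : Type*} [LieRing L] [LieAlgebra ℂ L]
  {bas : Module.Basis ((Fin r ⊕ Fin r) ⊕ (Fin s ⊕ Fin s)) ℂ L} {Z Zb : Fin r → L}
  {W Wb : Fin s → L}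

theorem disjoint_span_hol_span_antihol (hZ : ∀ k, Z k = bas (Sum.inl (Sum.inl k)))
    (hZb : ∀ k, Zb k = bas (Sum.inl (Sum.inr k))) (hW : ∀ a, W a = bas (Sum.inr (Sum.inl a)))
    (hWb : ∀ a, Wb a = bas (Sum.inr (Sum.inr a))) :
    Disjoint (span ℂ (Set.range Z ∪ Set.range W)) (span ℂ (Set.range Zb ∪ Set.range Wb)) := by
  have h10 : Set.range Z ∪ Set.range W = Set.range (bas ∘ Sum.map Sum.inl Sum.inl) := by
    rw [← Set.Sum.elim_range]
    congr 1
    funext j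
    rcases j with k | a <;> simp [hZ, hW]
  have h01 : Set.range Zb ∪ Set.range Wb = Set.range (bas ∘ Sum.map Sum.inr Sum.inr) := by
    rw [← Set.Sum.elim_range]
    congr 1
    funext j
    rcases j with k | a <;> simp [hZb, hWb]
  rw [h10, h01]
  exact bas.disjoint_span_range_comp
    (Set.disjoint_range_iff.mpr (by rintro (_ | _) (_ | _) <;> simp))

theorem exists_hol_part_of_ad_trace_eq (i : Fin r) (lam : Fin s → ℂ)
    (hZ : ∀ k, Z k = bas (Sum.inl (Sum.inl k))) (hZb : ∀ k, Zb k = bas (Sum.inl (Sum.inr k)))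
    (hW : ∀ a, W a = bas (Sum.inr (Sum.inl a))) (hWb : ∀ a, Wb a = bas (Sum.inr (Sum.inr a)))
    (hZZb : ∀ k, ⁅Z k, Zb i⁆ = if k = i then (-(I / 2)) • (Z k + Zb k) else 0)
    (hZbW : ∀ a, ⁅Zb i, W a⁆ = starRingEnd ℂ (lam a) • W a) :
    ∃ T : L →ₗ[ℂ] L, (∀ x, T x ∈ span ℂ (Set.range Z ∪ Set.range W)) ∧
      (∀ x ∈ span ℂ (Set.range Z ∪ Set.range W),
        ⁅Zb i, x⁆ - T x ∈ span ℂ (Set.range Zb ∪ Set.range Wb)) ∧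
      LinearMap.trace ℂ L T = I / 2 + ∑ a, starRingEnd ℂ (lam a) := by
  classical
  set T := Matrix.toLin bas bas (Matrix.diagonal
    (Sum.elim (Sum.elim (fun k => if k = i then I / 2 else 0) 0)
      (Sum.elim (fun a => starRingEnd ℂ (lam a)) 0))) with hT
  have hTZ : ∀ k, T (Z k) = (if k = i then I / 2 else 0) • Z k := fun k => by
    rw [hZ, hT, Matrix.toLin_diagonal_self]; rfl
  have hTZb : ∀ k, T (Zb k) = 0 := fun k => by
    rw [hZb, hT, Matrix.toLin_diagonal_self]; simp
  have hTW : ∀ a, T (W a) = starRingEnd ℂ (lam a) • W a := fun a => by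
    rw [hW, hT, Matrix.toLin_diagonal_self]; rfl
  have hTWb : ∀ a, T (Wb a) = 0 := fun a => by
    rw [hWb, hT, Matrix.toLin_diagonal_self]; simp
  refine ⟨T, fun x => ?_, fun x hx => ?_, ?_⟩
  · have hrange : LinearMap.range T ≤ span ℂ (Set.range Z ∪ Set.range W) := by
      rw [LinearMap.range_eq_map, ← bas.span_eq, map_span_le]
      rintro _ ⟨(k | k) | (a | a), rfl⟩
      · rw [← hZ, hTZ]; exact smul_mem _ _ (subset_span (Or.inl ⟨k, rfl⟩))
      · rw [← hZb, hTZb]; exact zero_mem _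
      · rw [← hW, hTW]; exact smul_mem _ _ (subset_span (Or.inr ⟨a, rfl⟩))
      · rw [← hWb, hTWb]; exact zero_mem _
    exact hrange (LinearMap.mem_range_self T x)
  · have hle : span ℂ (Set.range Z ∪ Set.range W) ≤
        (span ℂ (Set.range Zb ∪ Set.range Wb)).comap (LieModule.toEnd ℂ L L (Zb i) - T) := by
      rw [span_le]
      rintro _ (⟨k, rfl⟩ | ⟨a, rfl⟩) <;> simp only [SetLike.mem_coe, mem_comap,
        LinearMap.sub_apply, LieModule.toEnd_apply_apply]
      · rw [← lie_skew, hZZb, hTZ]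
        split_ifs with hk
        · subst hk
          rw [show -((-(I / 2)) • (Z k + Zb k)) - (I / 2) • Z k = (I / 2) • Zb k by module]
          exact smul_mem _ _ (subset_span (Or.inl ⟨k, rfl⟩))
        · simp
      · rw [hZbW, hTW, sub_self]
        exact zero_mem _
    exact hle hx
  · rw [hT, Matrix.trace_toLin_diagonal]
    simp [Fintype.sum_sum_type]

end Setting

theorem stmt_14_general (r s : ℕ)
    (L : Type*) [LieRing L] [LieAlgebra ℂ L]
    (bas : Module.Basis ((Fin r ⊕ Fin r) ⊕ (Fin s ⊕ Fin s)) ℂ L)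
    (Z Zb : Fin r → L) (W Wb : Fin s → L)
    (hZ : ∀ k, Z k = bas (Sum.inl (Sum.inl k)))
    (hZb : ∀ k, Zb k = bas (Sum.inl (Sum.inr k)))
    (hW : ∀ a, W a = bas (Sum.inr (Sum.inl a)))
    (hWb : ∀ a, Wb a = bas (Sum.inr (Sum.inr a)))
    -- (i) the structure of 𝔥
    (hZZb : ∀ k l, ⁅Z k, Zb l⁆ = if k = l then (-(I / 2)) • (Z k + Zb k) else 0)
    -- (ii) 𝔍 is an abelian ideal
    (hJabel : ∀ x ∈ Submodule.span ℂ (Set.range W ∪ Set.range Wb),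
      ∀ y ∈ Submodule.span ℂ (Set.range W ∪ Set.range Wb), ⁅x, y⁆ = (0 : L))
    (hJideal : ∀ x : L, ∀ y ∈ Submodule.span ℂ (Set.range W ∪ Set.range Wb),
      ⁅x, y⁆ ∈ Submodule.span ℂ (Set.range W ∪ Set.range Wb))
    -- (iv) the weights λ_a (given by their values λ_a(Z_k))
    (lam : Fin s → Fin r → ℂ)
    (hZWb : ∀ k a, ⁅Z k, Wb a⁆ = lam a k • Wb a)
    (hZbW : ∀ k a, ⁅Zb k, W a⁆ = (starRingEnd ℂ (lam a k)) • W a)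
    -- the antilinear involution σ
    (σ : L →ₛₗ[starRingEnd ℂ] L)
    (hσinv : ∀ x, σ (σ x) = x)
    (hσZ : ∀ k, σ (Z k) = Zb k)
    (hσW : ∀ a, σ (W a) = Wb a)
    (hσbr : ∀ x y : L, σ ⁅x, y⁆ = ⁅σ x, σ y⁆)
    -- the positive-definite Hermitian inner product h on 𝔤^{1,0}
    (h : L →ₗ[ℂ] L →ₛₗ[starRingEnd ℂ] ℂ)
    (hherm : ∀ x ∈ Submodule.span ℂ (Set.range Z ∪ Set.range W),
      ∀ y ∈ Submodule.span ℂ (Set.range Z ∪ Set.range W),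
        h x y = starRingEnd ℂ (h y x))
    -- the induced fundamental form ω
    (ω : L →ₗ[ℂ] L →ₗ[ℂ] ℂ)
    (hωalt : ∀ x : L, ω x x = 0)
    (hω10 : ∀ x ∈ Submodule.span ℂ (Set.range Z ∪ Set.range W),
      ∀ y ∈ Submodule.span ℂ (Set.range Z ∪ Set.range W), ω x y = 0)
    (hω01 : ∀ x ∈ Submodule.span ℂ (Set.range Zb ∪ Set.range Wb),
      ∀ y ∈ Submodule.span ℂ (Set.range Zb ∪ Set.range Wb), ω x y = 0)
    (hωh : ∀ x ∈ Submodule.span ℂ (Set.range Z ∪ Set.range W),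
      ∀ y ∈ Submodule.span ℂ (Set.range Z ∪ Set.range W), ω x (σ y) = I * h x y)
    -- an h-orthonormal basis of 𝔤^{1,0}
    (n : ℕ) (Xf : Fin n → L)
    (hXspan : Submodule.span ℂ (Set.range Xf) =
      Submodule.span ℂ (Set.range Z ∪ Set.range W))
    (hXon : ∀ a b, h (Xf a) (Xf b) = if a = b then 1 else 0)
    -- the (1,0)- and (0,1)-projections
    (p10 p01 : L → L)
    (hp : ∀ v : L, p10 v ∈ Submodule.span ℂ (Set.range Z ∪ Set.range W) ∧
      p01 v ∈ Submodule.span ℂ (Set.range Zb ∪ Set.range Wb) ∧ p10 v + p01 v = v)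
    -- the Chern-Ricci form of h
    (ρC : L → L → ℂ)
    (hρ : ∀ X Y : L, ρC X Y =
      -(∑ a, (ω ⁅p01 ⁅X, Y⁆, Xf a⁆ (σ (Xf a)) + ω ⁅p10 ⁅X, Y⁆, σ (Xf a)⁆ (Xf a)))) :
    (∀ X Y : L, (X ∈ Submodule.span ℂ (Set.range W ∪ Set.range Wb) ∨
      Y ∈ Submodule.span ℂ (Set.range W ∪ Set.range Wb)) → ρC X Y = 0) ∧
    (∀ i j, i ≠ j → ρC (Z i) (Zb j) = 0) ∧
    (∀ i, ρC (Z i) (Zb i) = -I * ((1 / 2 : ℂ) - ((∑ a, (lam a i).im : ℝ) : ℂ))) := by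
  have hσZb : ∀ k, σ (Zb k) = Z k := fun k => by rw [← hσZ, hσinv]
  have hσWb : ∀ a, σ (Wb a) = W a := fun a => by rw [← hσW, hσinv]
  have hσ10 : ∀ x ∈ span ℂ (Set.range Z ∪ Set.range W),
      σ x ∈ span ℂ (Set.range Zb ∪ Set.range Wb) :=
    fun _ => map_mem_span_union_of_map_eq σ hσZ hσW
  have hσ01 : ∀ x ∈ span ℂ (Set.range Zb ∪ Set.range Wb),
      σ x ∈ span ℂ (Set.range Z ∪ Set.range W) :=
    fun _ => map_mem_span_union_of_map_eq σ hσZb hσWb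
  have hρ' : ∀ X Y u w, u ∈ span ℂ (Set.range Z ∪ Set.range W) →
      w ∈ span ℂ (Set.range Zb ∪ Set.range Wb) → ⁅X, Y⁆ = u + w →
      ρC X Y = -∑ a, (ω ⁅w, Xf a⁆ (σ (Xf a)) + ω ⁅u, σ (Xf a)⁆ (Xf a)) := by
    intro X Y u w hu hw hXY
    obtain ⟨rfl, rfl⟩ := eq_and_eq_of_add_eq_add (disjoint_span_hol_span_antihol hZ hZb hW hWb)
      (hp _).1 hu (hp _).2.1 hw ((hp _).2.2.trans hXY)
    exact hρ X Y
  have hJ : ∀ x ∈ Set.range W ∪ Set.range Wb, ∀ y ∈ Set.range W ∪ Set.range Wb, ⁅x, y⁆ = 0 :=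
    fun x hx y hy => hJabel x (subset_span hx) y (subset_span hy)
  refine ⟨fun X Y hXY => ?_, fun i j hij => ?_, fun i => ?_⟩
  · have hbr := lie_mem_of_mem_left_or_right hJideal hXY
    rw [span_union] at hbr
    obtain ⟨u, hu, w, hw, huw⟩ := mem_sup.mp hbr
    have hu' : ∀ x ∈ span ℂ (Set.range Zb ∪ Set.range Wb), ⁅u, x⁆ ∈ span ℂ (Set.range Z ∪ _) :=
      fun _ => lie_mem_span_of_weight (fun a k => starRingEnd ℂ (lam a k)) hZbW
        (fun b a => hJ _ (Or.inl ⟨b, rfl⟩) _ (Or.inr ⟨a, rfl⟩)) hu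
    have hw' : ∀ x ∈ span ℂ (Set.range Z ∪ Set.range W), ⁅w, x⁆ ∈ span ℂ (Set.range Zb ∪ _) :=
      fun _ => lie_mem_span_of_weight lam hZWb
        (fun b a => hJ _ (Or.inr ⟨b, rfl⟩) _ (Or.inl ⟨a, rfl⟩)) hw
    rw [hρ' X Y u w (span_mono Set.subset_union_right hu) (span_mono Set.subset_union_right hw)
      huw.symm, sum_omega_lie_eq_zero hω10 hω01 hσ10 (fun a => hXspan ▸ subset_span ⟨a, rfl⟩)
      hu' hw', neg_zero]
  · rw [hρ' _ _ 0 0 (zero_mem _) (zero_mem _) (by rw [hZZb, if_neg hij, add_zero])]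
    simp
  · have := Module.Finite.of_basis bas
    obtain ⟨T, hTmem, hTad, htr⟩ := exists_hol_part_of_ad_trace_eq i (lam · i) hZ hZb hW hWb
      (hZZb · i) (hZbW i)
    rw [hρ' _ _ (-(I / 2) • Z i) (-(I / 2) • Zb i) (smul_mem _ _ (subset_span (Or.inl ⟨i, rfl⟩)))
      (smul_mem _ _ (subset_span (Or.inl ⟨i, rfl⟩))) (by rw [hZZb, if_pos rfl, smul_add])]
    simp only [smul_lie, map_smul, LinearMap.smul_apply, smul_eq_mul, ← mul_add, ← Finset.mul_sum]
    rw [← hσZb, sum_omega_lie_add_omega_lie_conj hωalt hω10 hω01 hωh hherm hσbr hσ10 hσ01 hXon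
      hXspan hTmem hTad, htr]
    simp only [add_im, div_ofNat_im, I_im, im_sum, conj_im, Finset.sum_neg_distrib]
    push_cast
    ring

/-- In the semidirect-product setting `𝔤 = 𝔥 ⋉ 𝔍` satisfying (i)–(iv),
for every positive-definite Hermitian inner product `h` on `𝔤^{1,0}` and every
`h`-orthonormal basis `{X_1,…,X_{r+s}}` of `𝔤^{1,0}`, the Chern-Ricci form satisfies
`ρ_C(X,Y) = 0` whenever `X ∈ 𝔍` or `Y ∈ 𝔍`, `ρ_C(Z_i, Z̄_j) = 0` for `i ≠ j`, and
`ρ_C(Z_i, Z̄_i) = −√−1·(1/2 − Σ_a Im λ_a(Z_i))`; in particular `ρ_C` does not depend on the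
choice of `h`. -/
theorem stmt_14 (r s : ℕ) (hr : 1 ≤ r) (hs : 1 ≤ s)
    (L : Type*) [LieRing L] [LieAlgebra ℂ L]
    (bas : Module.Basis ((Fin r ⊕ Fin r) ⊕ (Fin s ⊕ Fin s)) ℂ L)
    (Z Zb : Fin r → L) (W Wb : Fin s → L)
    (hZ : ∀ k, Z k = bas (Sum.inl (Sum.inl k)))
    (hZb : ∀ k, Zb k = bas (Sum.inl (Sum.inr k)))
    (hW : ∀ a, W a = bas (Sum.inr (Sum.inl a)))
    (hWb : ∀ a, Wb a = bas (Sum.inr (Sum.inr a)))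
    -- (i) the structure of 𝔥
    (hZZb : ∀ k l, ⁅Z k, Zb l⁆ = if k = l then (-(I / 2)) • (Z k + Zb k) else 0)
    (hZZ : ∀ k l, ⁅Z k, Z l⁆ = 0)
    (hZbZb : ∀ k l, ⁅Zb k, Zb l⁆ = 0)
    -- (ii) 𝔍 is an abelian ideal
    (hJabel : ∀ x ∈ Submodule.span ℂ (Set.range W ∪ Set.range Wb),
      ∀ y ∈ Submodule.span ℂ (Set.range W ∪ Set.range Wb), ⁅x, y⁆ = (0 : L))
    (hJideal : ∀ x : L, ∀ y ∈ Submodule.span ℂ (Set.range W ∪ Set.range Wb),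
      ⁅x, y⁆ ∈ Submodule.span ℂ (Set.range W ∪ Set.range Wb))
    -- (iii)
    (hZW : ∀ k a, ⁅Z k, W a⁆ ∈ Submodule.span ℂ (Set.range W))
    (hZbWb : ∀ k a, ⁅Zb k, Wb a⁆ ∈ Submodule.span ℂ (Set.range Wb))
    -- (iv) the weights λ_a (given by their values λ_a(Z_k))
    (lam : Fin s → Fin r → ℂ)
    (hZWb : ∀ k a, ⁅Z k, Wb a⁆ = lam a k • Wb a)
    (hZbW : ∀ k a, ⁅Zb k, W a⁆ = (starRingEnd ℂ (lam a k)) • W a)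
    -- the antilinear involution σ
    (σ : L →ₛₗ[starRingEnd ℂ] L)
    (hσinv : ∀ x, σ (σ x) = x)
    (hσZ : ∀ k, σ (Z k) = Zb k)
    (hσW : ∀ a, σ (W a) = Wb a)
    (hσbr : ∀ x y : L, σ ⁅x, y⁆ = ⁅σ x, σ y⁆)
    -- the positive-definite Hermitian inner product h on 𝔤^{1,0}
    (h : L →ₗ[ℂ] L →ₛₗ[starRingEnd ℂ] ℂ)
    (hherm : ∀ x ∈ Submodule.span ℂ (Set.range Z ∪ Set.range W),
      ∀ y ∈ Submodule.span ℂ (Set.range Z ∪ Set.range W),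
        h x y = starRingEnd ℂ (h y x))
    (hposdef : ∀ x ∈ Submodule.span ℂ (Set.range Z ∪ Set.range W), x ≠ 0 →
      0 < (h x x).re)
    -- the induced fundamental form ω
    (ω : L →ₗ[ℂ] L →ₗ[ℂ] ℂ)
    (hωalt : ∀ x : L, ω x x = 0)
    (hω10 : ∀ x ∈ Submodule.span ℂ (Set.range Z ∪ Set.range W),
      ∀ y ∈ Submodule.span ℂ (Set.range Z ∪ Set.range W), ω x y = 0)
    (hω01 : ∀ x ∈ Submodule.span ℂ (Set.range Zb ∪ Set.range Wb),
      ∀ y ∈ Submodule.span ℂ (Set.range Zb ∪ Set.range Wb), ω x y = 0)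
    (hωh : ∀ x ∈ Submodule.span ℂ (Set.range Z ∪ Set.range W),
      ∀ y ∈ Submodule.span ℂ (Set.range Z ∪ Set.range W), ω x (σ y) = I * h x y)
    -- an h-orthonormal basis of 𝔤^{1,0}
    (n : ℕ) (hn : n = r + s) (Xf : Fin n → L)
    (hXmem : ∀ a, Xf a ∈ Submodule.span ℂ (Set.range Z ∪ Set.range W))
    (hXspan : Submodule.span ℂ (Set.range Xf) =
      Submodule.span ℂ (Set.range Z ∪ Set.range W))
    (hXon : ∀ a b, h (Xf a) (Xf b) = if a = b then 1 else 0)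
    -- the (1,0)- and (0,1)-projections
    (p10 p01 : L → L)
    (hp : ∀ v : L, p10 v ∈ Submodule.span ℂ (Set.range Z ∪ Set.range W) ∧
      p01 v ∈ Submodule.span ℂ (Set.range Zb ∪ Set.range Wb) ∧ p10 v + p01 v = v)
    -- the Chern-Ricci form of h
    (ρC : L → L → ℂ)
    (hρ : ∀ X Y : L, ρC X Y =
      -(∑ a, (ω ⁅p01 ⁅X, Y⁆, Xf a⁆ (σ (Xf a)) + ω ⁅p10 ⁅X, Y⁆, σ (Xf a)⁆ (Xf a)))) :
    (∀ X Y : L, (X ∈ Submodule.span ℂ (Set.range W ∪ Set.range Wb) ∨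
      Y ∈ Submodule.span ℂ (Set.range W ∪ Set.range Wb)) → ρC X Y = 0) ∧
    (∀ i j, i ≠ j → ρC (Z i) (Zb j) = 0) ∧
    (∀ i, ρC (Z i) (Zb i) = -I * ((1 / 2 : ℂ) - ((∑ a, (lam a i).im : ℝ) : ℂ))) :=
  stmt_14_general r s L bas Z Zb W Wb hZ hZb hW hWb hZZb hJabel hJideal lam hZWb hZbW σ hσinv hσZ
    hσW hσbr h hherm ω hωalt hω10 hω01 hωh n Xf hXspan hXon p10 p01 hp ρC hρ
end

section
/- ρ_B(X, Y) = 0 for every X ∈ 𝔤^{1,0} and Y ∈ 𝔤^{0,1} such that X ∈ 𝔍^{1,0} or Y ∈ 𝔍^{0,1}. In other words, the (1,1)-component of the Bismut-Ricci form of any Hermitian metric making 𝔥 and 𝔍 orthogonal vanishes on 𝔥 ⊕ 𝔍 and on 𝔍 ⊕ 𝔍. -/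
open Complex
open Matrix

open Matrix in
private lemma auxmat {n : ℕ} (p q gm gi : Matrix (Fin n) (Fin n) ℂ)
    (hpq : p + q = 1) (hpp : p * p = p) (hgi : gm * gi = 1)
    (o1 : pᵀ * gm * q.map (starRingEnd ℂ) = 0)
    (o2 : qᵀ * gm * p.map (starRingEnd ℂ) = 0) :
    (q.map (starRingEnd ℂ)) * gi * pᵀ = 0 := by
  have hig : gi * gm = 1 := mul_eq_one_comm.mp hgi
  have hmap1 : (1 : Matrix (Fin n) (Fin n) ℂ).map (starRingEnd ℂ) = 1 := by
    ext i j; simp [Matrix.map_apply, Matrix.one_apply]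
  have hpqbar : p.map (starRingEnd ℂ) + q.map (starRingEnd ℂ) = 1 := by
    ext i j
    have := congrFun (congrFun hpq i) j
    simp [Matrix.map_apply, Matrix.add_apply, Matrix.one_apply] at this ⊢
    rw [← map_add, this]
    simp [Matrix.one_apply]
  have hpq0 : p * q = 0 := by
    have : p * q = p * (p + q) - p * p := by noncomm_ring
    rw [this, hpq, hpp]; simp
  set T := q.map (starRingEnd ℂ) * gi * pᵀ with hT
  have h1 : pᵀ * (gm * T) = 0 := by
    have : pᵀ * (gm * T) = (pᵀ * gm * q.map (starRingEnd ℂ)) * (gi * pᵀ) := by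
      rw [hT]; noncomm_ring
    rw [this, o1]; simp
  have h2 : qᵀ * (gm * T) = 0 := by
    have e1 : qᵀ * (gm * T) = qᵀ * gm * (p.map (starRingEnd ℂ) + q.map (starRingEnd ℂ)) * gi * pᵀ
        - (qᵀ * gm * p.map (starRingEnd ℂ)) * gi * pᵀ := by rw [hT]; noncomm_ring
    rw [e1, hpqbar, o2]
    have e2 : qᵀ * gm * 1 * gi * pᵀ = qᵀ * (gm * gi) * pᵀ := by noncomm_ring
    rw [e2, hgi]
    have e3 : qᵀ * 1 * pᵀ = (p * q)ᵀ := by rw [Matrix.transpose_mul]; noncomm_ring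
    rw [e3, hpq0]
    simp
  have h3 : gm * T = 0 := by
    have : gm * T = (p + q)ᵀ * (gm * T) := by rw [hpq]; simp
    rw [this, Matrix.transpose_add, add_mul, h1, h2, add_zero]
  calc T = (gi * gm) * T := by rw [hig]; simp
    _ = gi * (gm * T) := by noncomm_ring
    _ = 0 := by rw [h3]; simp

private lemma sum4_comm {n : ℕ} (f : Fin n → Fin n → Fin n → Fin n → ℂ) :
    ∑ a, ∑ b, ∑ c, ∑ d, f a b c d = ∑ c, ∑ d, ∑ a, ∑ b, f a b c d := by
  have h1 : ∀ a, ∑ b, ∑ c, ∑ d, f a b c d = ∑ c, ∑ d, ∑ b, f a b c d := fun a =>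
    (Finset.sum_comm).trans (Finset.sum_congr rfl fun _ _ => Finset.sum_comm)
  calc ∑ a, ∑ b, ∑ c, ∑ d, f a b c d
      = ∑ a, ∑ c, ∑ d, ∑ b, f a b c d := Finset.sum_congr rfl fun a _ => h1 a
    _ = ∑ c, ∑ a, ∑ d, ∑ b, f a b c d := Finset.sum_comm
    _ = ∑ c, ∑ d, ∑ a, ∑ b, f a b c d := Finset.sum_congr rfl fun _ _ => Finset.sum_comm

private lemma keysum {n : ℕ} (m U V s s' : Fin n → Fin n → ℂ)
    (hs : ∀ a b, s a b = ∑ c, ∑ d, U c a * V d b * s' c d)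
    (hUV : ∀ c d, (∑ a, ∑ b, U c a * m a b * V d b) = 0) :
    ∑ a, ∑ b, m a b * s a b = 0 := by
  calc ∑ a, ∑ b, m a b * s a b
      = ∑ a, ∑ b, ∑ c, ∑ d, U c a * m a b * V d b * s' c d := by
        refine Finset.sum_congr rfl fun a _ => Finset.sum_congr rfl fun b _ => ?_
        rw [hs, Finset.mul_sum]
        refine Finset.sum_congr rfl fun c _ => ?_
        rw [Finset.mul_sum]
        exact Finset.sum_congr rfl fun d _ => by ring
    _ = ∑ c, ∑ d, ∑ a, ∑ b, U c a * m a b * V d b * s' c d := sum4_comm _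
    _ = ∑ c, ∑ d, (∑ a, ∑ b, U c a * m a b * V d b) * s' c d := by
        refine Finset.sum_congr rfl fun c _ => Finset.sum_congr rfl fun d _ => ?_
        rw [Finset.sum_mul]
        exact Finset.sum_congr rfl fun a _ => by rw [Finset.sum_mul]
    _ = 0 := by simp [hUV]

private lemma entry3 {n : ℕ} (A B C : Matrix (Fin n) (Fin n) ℂ) (c d : Fin n) :
    (A * B * C) c d = ∑ a, ∑ b, A c a * B a b * C b d := by
  simp only [Matrix.mul_apply, Finset.sum_mul]
  exact Finset.sum_comm

private lemma lie_sum' {L : Type*} [LieRing L] (x : L) {ι : Type*} (s : Finset ι) (f : ι → L) :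
    ⁅x, ∑ i ∈ s, f i⁆ = ∑ i ∈ s, ⁅x, f i⁆ :=
  map_sum (AddMonoidHom.mk' (fun y => ⁅x, y⁆) (lie_add x)) f s

private lemma sum_lie' {L : Type*} [LieRing L] (x : L) {ι : Type*} (s : Finset ι) (f : ι → L) :
    ⁅∑ i ∈ s, f i, x⁆ = ∑ i ∈ s, ⁅f i, x⁆ :=
  map_sum (AddMonoidHom.mk' (fun y => ⁅y, x⁆) (fun a b => add_lie a b x)) f s
/-- Let `𝔤 = 𝔥 ⋉ 𝔍` be a semidirect product of Lie algebras with a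
splitting complex structure (complexified description: `𝔤 = 𝔥^{1,0} ⊕ 𝔥^{0,1} ⊕ 𝔍^{1,0} ⊕
𝔍^{0,1}` with `𝔥` a subalgebra, `𝔍` an abelian ideal, `[𝔤^{1,0},𝔤^{1,0}] ⊆ 𝔤^{1,0}`,
`[𝔤^{0,1},𝔤^{0,1}] ⊆ 𝔤^{0,1}`). Then for any Hermitian metric making `𝔥` and `𝔍`
orthogonal, the Bismut-Ricci form satisfies `ρ_B(X,Y) = 0` for every `X ∈ 𝔤^{1,0}`,
`Y ∈ 𝔤^{0,1}` with `X ∈ 𝔍^{1,0}` or `Y ∈ 𝔍^{0,1}`; i.e. `ρ_B^{1,1}` vanishes on `𝔥 ⊕ 𝔍`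
and on `𝔍 ⊕ 𝔍`. -/
theorem stmt_15 (L : Type*) [LieRing L] [LieAlgebra ℂ L]
    (H10 H01 J10 J01 : Submodule ℂ L)
    (g10 g01 : Submodule ℂ L) (hg10 : g10 = H10 ⊔ J10) (hg01 : g01 = H01 ⊔ J01)
    (hdisj10 : Disjoint H10 J10) (hdisj01 : Disjoint H01 J01)
    (hcompl : IsCompl g10 g01)
    -- 𝔥 is a Lie subalgebra
    (hsub : ∀ x ∈ H10 ⊔ H01, ∀ y ∈ H10 ⊔ H01, ⁅x, y⁆ ∈ H10 ⊔ H01)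
    -- 𝔍 is an abelian ideal
    (hJideal : ∀ x : L, ∀ y ∈ J10 ⊔ J01, ⁅x, y⁆ ∈ J10 ⊔ J01)
    (hJabel : ∀ x ∈ J10 ⊔ J01, ∀ y ∈ J10 ⊔ J01, ⁅x, y⁆ = (0 : L))
    -- integrability of the splitting complex structure
    (hint10 : ∀ x ∈ g10, ∀ y ∈ g10, ⁅x, y⁆ ∈ g10)
    (hint01 : ∀ x ∈ g01, ∀ y ∈ g01, ⁅x, y⁆ ∈ g01)
    -- the antilinear involution σ
    (σ : L →ₛₗ[starRingEnd ℂ] L)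
    (hσinv : ∀ x, σ (σ x) = x)
    (hσH : Submodule.map σ H10 = H01)
    (hσJ : Submodule.map σ J10 = J01)
    (hσbr : ∀ x y : L, σ ⁅x, y⁆ = ⁅σ x, σ y⁆)
    -- a positive-definite Hermitian inner product h on 𝔤^{1,0} making 𝔥^{1,0} ⊥ 𝔍^{1,0}
    (h : L →ₗ[ℂ] L →ₛₗ[starRingEnd ℂ] ℂ)
    (hherm : ∀ x ∈ g10, ∀ y ∈ g10, h x y = starRingEnd ℂ (h y x))
    (hposdef : ∀ x ∈ g10, x ≠ 0 → 0 < (h x x).re)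
    (horth : ∀ x ∈ H10, ∀ y ∈ J10, h x y = 0)
    -- the induced fundamental form ω
    (ω : L →ₗ[ℂ] L →ₗ[ℂ] ℂ)
    (hωalt : ∀ x : L, ω x x = 0)
    (hω10 : ∀ x ∈ g10, ∀ y ∈ g10, ω x y = 0)
    (hω01 : ∀ x ∈ g01, ∀ y ∈ g01, ω x y = 0)
    (hωh : ∀ x ∈ g10, ∀ y ∈ g10, ω x (σ y) = I * h x y)
    -- a basis of 𝔤^{1,0}, the matrix of h and its inverse
    (n : ℕ) (Xf : Fin n → L)
    (hXind : LinearIndependent ℂ Xf)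
    (hXspan : Submodule.span ℂ (Set.range Xf) = g10)
    (g ginv : Fin n → Fin n → ℂ)
    (hgmat : ∀ a b, g a b = h (Xf a) (Xf b))
    (hinv : ∀ a b, ∑ cc, g a cc * ginv cc b = if a = b then 1 else 0)
    -- the (1,0)- and (0,1)-projections and the complex structure J
    (p10 p01 : L → L)
    (hp : ∀ v : L, p10 v ∈ g10 ∧ p01 v ∈ g01 ∧ p10 v + p01 v = v)
    (Jmap : L → L) (hJmap : ∀ v, Jmap v = I • p10 v - I • p01 v)
    -- the Bismut-Ricci form
    (ρB : L → L → ℂ)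
    (hρ : ∀ X Y : L, ρB X Y =
      -(∑ a, ∑ b, (starRingEnd ℂ (ginv a b) * ω ⁅p10 ⁅X, Y⁆, Xf a⁆ (σ (Xf b))
          + ginv a b * ω ⁅p01 ⁅X, Y⁆, σ (Xf a)⁆ (Xf b)))
      + I * ∑ a, ∑ b, starRingEnd ℂ (ginv a b) * ω ⁅X, Y⁆ (Jmap ⁅Xf a, σ (Xf b)⁆)) :
    ∀ X ∈ g10, ∀ Y ∈ g01, (X ∈ J10 ∨ Y ∈ J01) → ρB X Y = 0 := by
  intro X hX Y hY hXJ
  rw [hρ X Y]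
  set Z := ⁅X, Y⁆ with hZdef
  -- lattice facts
  have hH10g : H10 ≤ g10 := hg10 ▸ le_sup_left
  have hJ10g : J10 ≤ g10 := hg10 ▸ le_sup_right
  have hH01g : H01 ≤ g01 := hg01 ▸ le_sup_left
  have hJ01g : J01 ≤ g01 := hg01 ▸ le_sup_right
  -- σ facts
  have sH : ∀ x ∈ H10, σ x ∈ H01 := fun x hx => hσH ▸ Submodule.mem_map_of_mem hx
  have sJ : ∀ x ∈ J10, σ x ∈ J01 := fun x hx => hσJ ▸ Submodule.mem_map_of_mem hx
  have sH' : ∀ x ∈ H01, σ x ∈ H10 := by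
    intro x hx
    rw [← hσH] at hx
    obtain ⟨y, hy, rfl⟩ := hx
    rw [hσinv]; exact hy
  have sJ' : ∀ x ∈ J01, σ x ∈ J10 := by
    intro x hx
    rw [← hσJ] at hx
    obtain ⟨y, hy, rfl⟩ := hx
    rw [hσinv]; exact hy
  -- omega skew
  have ωskew : ∀ x y : L, ω x y = -ω y x := by
    intro x y
    have h0 := hωalt (x + y)
    simp only [map_add, LinearMap.add_apply, hωalt] at h0
    linear_combination h0
  -- disjointness of g10 g01
  have hdisj : ∀ v : L, v ∈ g10 → v ∈ g01 → v = 0 := fun v h1 h2 =>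
    (Submodule.disjoint_def.mp hcompl.disjoint) v h1 h2
  -- uniqueness of projections
  have puniq : ∀ u ∈ g10, ∀ u' ∈ g01, p10 (u + u') = u ∧ p01 (u + u') = u' := by
    intro u hu u' hu'
    obtain ⟨m1, m2, hsum⟩ := hp (u + u')
    have e : p10 (u + u') - u = u' - p01 (u + u') :=
      sub_eq_sub_iff_add_eq_add.mpr (hsum.trans (add_comm u u'))
    have h1 : p10 (u + u') - u ∈ g10 := sub_mem m1 hu
    have h2 : p10 (u + u') - u ∈ g01 := e ▸ sub_mem hu' m2
    have h0 := hdisj _ h1 h2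
    refine ⟨sub_eq_zero.mp h0, ?_⟩
    have h0' : u' - p01 (u + u') = 0 := e.symm.trans h0
    exact (sub_eq_zero.mp h0').symm
  -- Z in J
  have hZJ : Z ∈ J10 ⊔ J01 := by
    rcases hXJ with hXJ | hYJ
    · have h1 : ⁅Y, X⁆ ∈ J10 ⊔ J01 := hJideal Y X (Submodule.mem_sup_left hXJ)
      rw [hZdef, ← lie_skew]
      exact neg_mem h1
    · exact hJideal X Y (Submodule.mem_sup_right hYJ)
  obtain ⟨zj, hzj, zj', hzj', hzsum⟩ := Submodule.mem_sup.mp hZJ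
  have hz10 : p10 Z = zj ∧ p01 Z = zj' := by
    have := puniq zj (hJ10g hzj) zj' (hJ01g hzj')
    rwa [hzsum] at this
  have hz1J : p10 Z ∈ J10 := hz10.1 ▸ hzj
  have hz0J : p01 Z ∈ J01 := hz10.2 ▸ hzj'
  -- orth, symmetric form
  have horth' : ∀ x ∈ J10, ∀ y ∈ H10, h x y = 0 := by
    intro x hx y hy
    rw [hherm x (hJ10g hx) y (hH10g hy), horth y hy x hx, map_zero]
  -- membership in J10 from J and g10
  have memJ10 : ∀ v ∈ J10 ⊔ J01, v ∈ g10 → v ∈ J10 := by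
    intro v hv hvg
    obtain ⟨j, hj, j', hj', hsum⟩ := Submodule.mem_sup.mp hv
    have e : j' = v - j := by rw [← hsum]; abel
    have hj'g : j' ∈ g10 := e ▸ sub_mem hvg (hJ10g hj)
    have hj'0 : j' = 0 := hdisj _ hj'g (hJ01g hj')
    rw [← hsum, hj'0, add_zero]; exact hj
  have memJ01 : ∀ v ∈ J10 ⊔ J01, v ∈ g01 → v ∈ J01 := by
    intro v hv hvg
    obtain ⟨j, hj, j', hj', hsum⟩ := Submodule.mem_sup.mp hv
    have e : j = v - j' := by rw [← hsum]; abel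
    have hjg : j ∈ g01 := e ▸ sub_mem hvg (hJ01g hj')
    have hj0 : j = 0 := hdisj _ (hJ10g hj) hjg
    rw [← hsum, hj0, zero_add]; exact hj'
  -- coordinates on g10
  have hXmem : ∀ a, Xf a ∈ g10 := fun a => hXspan ▸ Submodule.subset_span ⟨a, rfl⟩
  have coords : ∀ v ∈ g10, ∃ cf : Fin n → ℂ, ∑ i, cf i • Xf i = v := by
    intro v hv
    rw [← hXspan] at hv
    exact (Submodule.mem_span_range_iff_exists_fun ℂ).mp hv
  have indep : ∀ u : Fin n → ℂ, ∑ i, u i • Xf i = 0 → ∀ i, u i = 0 :=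
    Fintype.linearIndependent_iff.mp hXind
  -- H/J decomposition of the basis
  have hdecX : ∀ a, ∃ u ∈ H10, ∃ w ∈ J10, u + w = Xf a := by
    intro a
    have := hXmem a
    rw [hg10] at this
    exact Submodule.mem_sup.mp this
  choose η hη ξ hξ hηξ using hdecX
  have hKPex : ∀ a, ∃ cf : Fin n → ℂ, ∑ c, cf c • Xf c = η a :=
    fun a => coords _ (hH10g (hη a))
  choose KP hKP using hKPex
  set KQ : Fin n → Fin n → ℂ := fun a c => (if a = c then 1 else 0) - KP a c with hKQdef
  have hKQ : ∀ a, ∑ c, KQ a c • Xf c = ξ a := by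
    intro a
    have e1 : ∑ c, KQ a c • Xf c
        = (∑ c, (if a = c then (1 : ℂ) else 0) • Xf c) - ∑ c, KP a c • Xf c := by
      rw [← Finset.sum_sub_distrib]
      exact Finset.sum_congr rfl fun c _ => sub_smul _ _ _
    rw [e1, hKP]
    have e2 : ∑ c, (if a = c then (1 : ℂ) else 0) • Xf c = Xf a := by
      simp [ite_smul]
    rw [e2, ← hηξ a]
    abel
  -- idempotence of the coordinate projection
  have hdelta : ∀ a, η a = ∑ e, KP a e • η e := by
    intro a
    have hmemH : η a - ∑ e, KP a e • η e ∈ H10 :=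
      sub_mem (hη a) (Submodule.sum_smul_mem _ _ fun e _ => hη e)
    have e2 : η a - ∑ e, KP a e • η e = ∑ e, KP a e • ξ e := by
      conv_lhs => rw [← hKP a]
      rw [← Finset.sum_sub_distrib]
      refine Finset.sum_congr rfl fun e _ => ?_
      rw [← hηξ e, smul_add]
      abel
    have hmemJ : η a - ∑ e, KP a e • η e ∈ J10 := by
      rw [e2]; exact Submodule.sum_smul_mem _ _ fun e _ => hξ e
    have h0 : η a - ∑ e, KP a e • η e = 0 :=
      (Submodule.disjoint_def.mp hdisj10) _ hmemH hmemJ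
    exact sub_eq_zero.mp h0
  have hPP : ∀ a c, ∑ e, KP a e * KP e c = KP a c := by
    intro a c
    have hv : ∑ c, (∑ e, KP a e * KP e c) • Xf c = ∑ c, KP a c • Xf c := by
      calc ∑ c, (∑ e, KP a e * KP e c) • Xf c
          = ∑ c, ∑ e, (KP a e * KP e c) • Xf c := by
            exact Finset.sum_congr rfl fun c _ => Finset.sum_smul
        _ = ∑ e, ∑ c, (KP a e * KP e c) • Xf c := Finset.sum_comm
        _ = ∑ e, KP a e • ∑ c, KP e c • Xf c := by
            refine Finset.sum_congr rfl fun e _ => ?_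
            rw [Finset.smul_sum]
            exact Finset.sum_congr rfl fun c _ => (smul_smul _ _ _).symm
        _ = ∑ e, KP a e • η e := by
            exact Finset.sum_congr rfl fun e _ => by rw [hKP]
        _ = η a := (hdelta a).symm
        _ = ∑ c, KP a c • Xf c := (hKP a).symm
    have h0 := indep (fun c => (∑ e, KP a e * KP e c) - KP a c) ?_ c
    · exact sub_eq_zero.mp h0
    · rw [← sub_eq_zero] at hv
      rw [← hv, ← Finset.sum_sub_distrib]
      exact Finset.sum_congr rfl fun c _ => sub_smul _ _ _
  -- the matrices
  set pM : Matrix (Fin n) (Fin n) ℂ := Matrix.of fun c a => KP a c with hpM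
  set qM : Matrix (Fin n) (Fin n) ℂ := Matrix.of fun c a => KQ a c with hqM
  set gM : Matrix (Fin n) (Fin n) ℂ := Matrix.of g with hgM
  set giM : Matrix (Fin n) (Fin n) ℂ := Matrix.of ginv with hgiM
  have hpq : pM + qM = 1 := by
    ext c a
    simp only [hpM, hqM, Matrix.add_apply, Matrix.of_apply, Matrix.one_apply, hKQdef]
    rw [show KP a c + ((if a = c then (1:ℂ) else 0) - KP a c) = if a = c then 1 else 0 by ring]
    simp [eq_comm]
  have hpp : pM * pM = pM := by
    ext c a
    simp only [hpM, Matrix.mul_apply, Matrix.of_apply]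
    calc ∑ e, KP e c * KP a e = ∑ e, KP a e * KP e c :=
          Finset.sum_congr rfl fun e _ => mul_comm _ _
      _ = KP a c := hPP a c
  have hgi : gM * giM = 1 := by
    ext a b
    simp only [hgM, hgiM, Matrix.mul_apply, Matrix.of_apply, Matrix.one_apply]
    exact hinv a b
  -- expansion of h on coordinates
  have hexp : ∀ (u w : Fin n → ℂ),
      h (∑ c, u c • Xf c) (∑ d, w d • Xf d)
        = ∑ c, ∑ d, u c * g c d * starRingEnd ℂ (w d) := by
    intro u w
    simp only [map_sum, LinearMap.sum_apply, _root_.map_smul, LinearMap.smul_apply, map_smulₛₗ,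
      smul_eq_mul, Finset.mul_sum]
    rw [Finset.sum_comm]
    refine Finset.sum_congr rfl fun c _ => Finset.sum_congr rfl fun d _ => ?_
    rw [hgmat]
    ring
  have o1 : pMᵀ * gM * qM.map (starRingEnd ℂ) = 0 := by
    ext a b
    rw [entry3]
    have e1 : ∑ c, ∑ d, pMᵀ a c * gM c d * qM.map (starRingEnd ℂ) d b
        = ∑ c, ∑ d, KP a c * g c d * starRingEnd ℂ (KQ b d) := by
      refine Finset.sum_congr rfl fun c _ => Finset.sum_congr rfl fun d _ => ?_
      simp [hpM, hqM, hgM, Matrix.transpose_apply, Matrix.map_apply]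
    rw [e1, ← hexp, hKP, hKQ, horth _ (hη a) _ (hξ b)]
    simp
  have o2 : qMᵀ * gM * pM.map (starRingEnd ℂ) = 0 := by
    ext a b
    rw [entry3]
    have e1 : ∑ c, ∑ d, qMᵀ a c * gM c d * pM.map (starRingEnd ℂ) d b
        = ∑ c, ∑ d, KQ a c * g c d * starRingEnd ℂ (KP b d) := by
      refine Finset.sum_congr rfl fun c _ => Finset.sum_congr rfl fun d _ => ?_
      simp [hpM, hqM, hgM, Matrix.transpose_apply, Matrix.map_apply]
    rw [e1, ← hexp, hKP, hKQ, horth' _ (hξ a) _ (hη b)]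
    simp
  have hqq : qM * qM = qM := by
    have hq1 : qM = 1 - pM := by
      rw [← hpq]; abel
    rw [hq1]
    have e : ((1:Matrix (Fin n) (Fin n) ℂ) - pM) * (1 - pM) = 1 - pM - pM + pM * pM := by
      noncomm_ring
    rw [e, hpp]
    abel
  have R1mat : qM.map (starRingEnd ℂ) * giM * pMᵀ = 0 := auxmat pM qM gM giM hpq hpp hgi o1 o2
  have R2mat : pM.map (starRingEnd ℂ) * giM * qMᵀ = 0 :=
    auxmat qM pM gM giM (by rw [add_comm]; exact hpq) hqq hgi o2 o1
  -- scalar forms of the coefficient identities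
  have E3' : ∀ c d, ∑ a, ∑ b, starRingEnd ℂ (KP a c) * ginv a b * KQ b d = 0 := by
    intro c d
    have e := entry3 (pM.map (starRingEnd ℂ)) giM qMᵀ c d
    rw [R2mat] at e
    simp only [Matrix.zero_apply] at e
    rw [show (0:ℂ) = ∑ a, ∑ b, (pM.map (starRingEnd ℂ)) c a * giM a b * qMᵀ b d from e]
    refine Finset.sum_congr rfl fun a _ => Finset.sum_congr rfl fun b _ => ?_
    simp [hpM, hqM, hgiM, Matrix.map_apply, Matrix.transpose_apply]
  have R1' : ∀ c d, ∑ a, ∑ b, starRingEnd ℂ (KQ a c) * ginv a b * KP b d = 0 := by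
    intro c d
    have e := entry3 (qM.map (starRingEnd ℂ)) giM pMᵀ c d
    rw [R1mat] at e
    simp only [Matrix.zero_apply] at e
    rw [show (0:ℂ) = ∑ a, ∑ b, (qM.map (starRingEnd ℂ)) c a * giM a b * pMᵀ b d from e]
    refine Finset.sum_congr rfl fun a _ => Finset.sum_congr rfl fun b _ => ?_
    simp [hpM, hqM, hgiM, Matrix.map_apply, Matrix.transpose_apply]
  have E1' : ∀ c d, ∑ a, ∑ b, KP a c * starRingEnd ℂ (ginv a b) * starRingEnd ℂ (KQ b d) = 0 := by
    intro c d
    have e := congrArg (starRingEnd ℂ) (E3' c d)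
    rw [map_zero] at e
    rw [← e]
    simp only [map_sum, _root_.map_mul, Complex.conj_conj]
  have E2' : ∀ c d, ∑ a, ∑ b, KQ a c * starRingEnd ℂ (ginv a b) * starRingEnd ℂ (KP b d) = 0 := by
    intro c d
    have e := congrArg (starRingEnd ℂ) (R1' c d)
    rw [map_zero] at e
    rw [← e]
    simp only [map_sum, _root_.map_mul, Complex.conj_conj]
  -- linearity of the projections and of Jmap
  have padd : ∀ v w : L, p10 (v + w) = p10 v + p10 w ∧ p01 (v + w) = p01 v + p01 w := by
    intro v w
    have e : (p10 v + p10 w) + (p01 v + p01 w) = v + w := by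
      rw [add_add_add_comm, (hp v).2.2, (hp w).2.2]
    have := puniq (p10 v + p10 w) (add_mem (hp v).1 (hp w).1) (p01 v + p01 w)
      (add_mem (hp v).2.1 (hp w).2.1)
    rwa [e] at this
  have psmul : ∀ (c : ℂ) (v : L), p10 (c • v) = c • p10 v ∧ p01 (c • v) = c • p01 v := by
    intro c v
    have e : c • p10 v + c • p01 v = c • v := by rw [← smul_add, (hp v).2.2]
    have := puniq (c • p10 v) (Submodule.smul_mem _ _ (hp v).1) (c • p01 v)
      (Submodule.smul_mem _ _ (hp v).2.1)
    rwa [e] at this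
  have JmapAdd : ∀ v w : L, Jmap (v + w) = Jmap v + Jmap w := by
    intro v w
    rw [hJmap, hJmap, hJmap, (padd v w).1, (padd v w).2, smul_add, smul_add]
    abel
  have JmapSmul : ∀ (c : ℂ) (v : L), Jmap (c • v) = c • Jmap v := by
    intro c v
    rw [hJmap, hJmap, (psmul c v).1, (psmul c v).2, smul_sub, smul_comm c I, smul_comm c I]
  -- expansion helpers
  have ωexpand : ∀ (α β : Fin n → ℂ) (Av Bv : Fin n → L),
      ω (∑ c, α c • Av c) (∑ d, β d • Bv d) = ∑ c, ∑ d, α c * β d * ω (Av c) (Bv d) := by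
    intro α β Av Bv
    simp only [map_sum, LinearMap.sum_apply, _root_.map_smul, LinearMap.smul_apply,
      smul_eq_mul, Finset.mul_sum]
    rw [Finset.sum_comm]
    refine Finset.sum_congr rfl fun c _ => Finset.sum_congr rfl fun d _ => by ring
  have σexpand : ∀ (β : Fin n → ℂ) (v : Fin n → L),
      σ (∑ d, β d • v d) = ∑ d, starRingEnd ℂ (β d) • σ (v d) := by
    intro β v
    rw [map_sum]
    exact Finset.sum_congr rfl fun d _ => σ.map_smulₛₗ _ _
  have brexpand : ∀ (α β : Fin n → ℂ) (Av Bv : Fin n → L),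
      ⁅∑ c, α c • Av c, ∑ d, β d • Bv d⁆ = ∑ c, ∑ d, (α c * β d) • ⁅Av c, Bv d⁆ := by
    intro α β Av Bv
    rw [sum_lie']
    refine Finset.sum_congr rfl fun c _ => ?_
    rw [smul_lie, lie_sum', Finset.smul_sum]
    refine Finset.sum_congr rfl fun d _ => ?_
    rw [lie_smul, smul_smul]
  have Jmapsum : ∀ (f : Fin n → Fin n → L),
      Jmap (∑ c, ∑ d, f c d) = ∑ c, ∑ d, Jmap (f c d) := by
    intro f
    let JH : L →+ L := AddMonoidHom.mk' Jmap JmapAdd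
    calc Jmap (∑ c, ∑ d, f c d) = JH (∑ c, ∑ d, f c d) := rfl
      _ = ∑ c, JH (∑ d, f c d) := map_sum JH _ _
      _ = ∑ c, ∑ d, JH (f c d) := Finset.sum_congr rfl fun c _ => map_sum JH _ _
      _ = ∑ c, ∑ d, Jmap (f c d) := rfl
  -- Term A
  have hA : ∑ a, ∑ b, starRingEnd ℂ (ginv a b) * ω ⁅p10 Z, Xf a⁆ (σ (Xf b)) = 0 := by
    refine keysum (fun a b => starRingEnd ℂ (ginv a b)) (fun c a => KP a c)
      (fun d b => starRingEnd ℂ (KQ b d)) (fun a b => ω ⁅p10 Z, Xf a⁆ (σ (Xf b)))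
      (fun c d => ω ⁅p10 Z, Xf c⁆ (σ (Xf d))) ?_ E1'
    intro a b
    have e1 : ⁅p10 Z, Xf a⁆ = ⁅p10 Z, η a⁆ := by
      conv_lhs => rw [← hηξ a]
      rw [lie_add, hJabel (p10 Z) (Submodule.mem_sup_left hz1J) (ξ a)
        (Submodule.mem_sup_left (hξ a)), add_zero]
    have hbrg : ⁅p10 Z, η a⁆ ∈ g10 := hint10 _ (hJ10g hz1J) _ (hH10g (hη a))
    have hbrJ : ⁅p10 Z, η a⁆ ∈ J10 := by
      refine memJ10 _ ?_ hbrg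
      rw [← lie_skew]
      exact neg_mem (hJideal (η a) (p10 Z) (Submodule.mem_sup_left hz1J))
    have e3 : ω ⁅p10 Z, η a⁆ (σ (η b)) = 0 := by
      rw [hωh _ hbrg _ (hH10g (hη b)), horth' _ hbrJ _ (hη b), mul_zero]
    have e2 : ⁅p10 Z, η a⁆ = ∑ c, KP a c • ⁅p10 Z, Xf c⁆ := by
      rw [← hKP a, lie_sum']
      exact Finset.sum_congr rfl fun c _ => lie_smul _ _ _
    calc ω ⁅p10 Z, Xf a⁆ (σ (Xf b))
        = ω ⁅p10 Z, η a⁆ (σ (η b) + σ (ξ b)) := by rw [e1, ← map_add, hηξ b]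
      _ = ω ⁅p10 Z, η a⁆ (σ (ξ b)) := by rw [map_add, e3, zero_add]
      _ = ω (∑ c, KP a c • ⁅p10 Z, Xf c⁆) (∑ d, starRingEnd ℂ (KQ b d) • σ (Xf d)) := by
          rw [e2, ← hKQ b, σexpand]
      _ = ∑ c, ∑ d, KP a c * starRingEnd ℂ (KQ b d) * ω ⁅p10 Z, Xf c⁆ (σ (Xf d)) :=
          ωexpand _ _ _ _
  -- Term B
  have hB : ∑ a, ∑ b, ginv a b * ω ⁅p01 Z, σ (Xf a)⁆ (Xf b) = 0 := by
    refine keysum ginv (fun c a => starRingEnd ℂ (KP a c)) (fun d b => KQ b d)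
      (fun a b => ω ⁅p01 Z, σ (Xf a)⁆ (Xf b)) (fun c d => ω ⁅p01 Z, σ (Xf c)⁆ (Xf d)) ?_ E3'
    intro a b
    have e1 : ⁅p01 Z, σ (Xf a)⁆ = ⁅p01 Z, σ (η a)⁆ := by
      conv_lhs => rw [← hηξ a]
      rw [map_add, lie_add, hJabel (p01 Z) (Submodule.mem_sup_right hz0J) (σ (ξ a))
        (Submodule.mem_sup_right (sJ _ (hξ a))), add_zero]
    have hbrg : ⁅p01 Z, σ (η a)⁆ ∈ g01 := hint01 _ (hJ01g hz0J) _ (hH01g (sH _ (hη a)))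
    have hbrJ : ⁅p01 Z, σ (η a)⁆ ∈ J01 := by
      refine memJ01 _ ?_ hbrg
      rw [← lie_skew]
      exact neg_mem (hJideal (σ (η a)) (p01 Z) (Submodule.mem_sup_right hz0J))
    have e3 : ω ⁅p01 Z, σ (η a)⁆ (η b) = 0 := by
      have hk : σ ⁅p01 Z, σ (η a)⁆ ∈ J10 := sJ' _ hbrJ
      have e : ⁅p01 Z, σ (η a)⁆ = σ (σ ⁅p01 Z, σ (η a)⁆) := (hσinv _).symm
      rw [e, ωskew, hωh _ (hH10g (hη b)) _ (hJ10g hk), horth _ (hη b) _ hk, mul_zero, neg_zero]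
    have e2 : ⁅p01 Z, σ (η a)⁆ = ∑ c, starRingEnd ℂ (KP a c) • ⁅p01 Z, σ (Xf c)⁆ := by
      conv_lhs => rw [← hKP a]
      rw [σexpand, lie_sum']
      exact Finset.sum_congr rfl fun c _ => lie_smul _ _ _
    calc ω ⁅p01 Z, σ (Xf a)⁆ (Xf b)
        = ω ⁅p01 Z, σ (η a)⁆ (η b + ξ b) := by rw [e1, hηξ b]
      _ = ω ⁅p01 Z, σ (η a)⁆ (ξ b) := by rw [map_add, e3, zero_add]
      _ = ω (∑ c, starRingEnd ℂ (KP a c) • ⁅p01 Z, σ (Xf c)⁆) (∑ d, KQ b d • Xf d) := by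
          rw [e2, ← hKQ b]
      _ = ∑ c, ∑ d, starRingEnd ℂ (KP a c) * KQ b d * ω ⁅p01 Z, σ (Xf c)⁆ (Xf d) :=
          ωexpand _ _ _ _
  -- Term C
  have hC : ∑ a, ∑ b, starRingEnd ℂ (ginv a b) * ω Z (Jmap ⁅Xf a, σ (Xf b)⁆) = 0 := by
    have hVH0 : ∀ a b : Fin n, ω Z (Jmap ⁅η a, σ (η b)⁆) = 0 := by
      intro a b
      have hVH : ⁅η a, σ (η b)⁆ ∈ H10 ⊔ H01 :=
        hsub _ (Submodule.mem_sup_left (hη a)) _ (Submodule.mem_sup_right (sH _ (hη b)))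
      obtain ⟨u, hu, u', hu', hsum⟩ := Submodule.mem_sup.mp hVH
      have hpu := puniq u (hH10g hu) u' (hH01g hu')
      have hZ2 : p10 Z + p01 Z = Z := (hp Z).2.2
      have hωZu : ω Z u = 0 := by
        rw [← hZ2, map_add, LinearMap.add_apply, hω10 _ (hp Z).1 _ (hH10g hu), zero_add]
        have hw0 : σ (p01 Z) ∈ J10 := sJ' _ hz0J
        have e : p01 Z = σ (σ (p01 Z)) := (hσinv _).symm
        rw [e, ωskew, hωh _ (hH10g hu) _ (hJ10g hw0), horth _ hu _ hw0, mul_zero, neg_zero]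
      have hωZu' : ω Z u' = 0 := by
        rw [← hZ2, map_add, LinearMap.add_apply, hω01 _ (hp Z).2.1 _ (hH01g hu'), add_zero]
        have hv' : σ u' ∈ H10 := sH' _ hu'
        have e : u' = σ (σ u') := (hσinv _).symm
        rw [e, hωh _ (hp Z).1 _ (hH10g hv'), horth' _ hz1J _ hv']
        simp
      rw [← hsum, hJmap, hpu.1, hpu.2, map_sub, _root_.map_smul, _root_.map_smul,
        hωZu, hωZu']
      simp
    have hsplit : ∀ a b : Fin n, ω Z (Jmap ⁅Xf a, σ (Xf b)⁆)
        = ω Z (Jmap ⁅η a, σ (ξ b)⁆) + ω Z (Jmap ⁅ξ a, σ (η b)⁆) := by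
      intro a b
      have e0 : ⁅Xf a, σ (Xf b)⁆
          = ⁅η a, σ (η b)⁆ + (⁅η a, σ (ξ b)⁆ + ⁅ξ a, σ (η b)⁆) := by
        conv_lhs => rw [← hηξ a, ← hηξ b]
        rw [map_add, add_lie, lie_add, lie_add,
          hJabel (ξ a) (Submodule.mem_sup_left (hξ a)) (σ (ξ b))
            (Submodule.mem_sup_right (sJ _ (hξ b)))]
        abel
      rw [e0, JmapAdd, map_add, hVH0, zero_add, JmapAdd, map_add]
    have hC1 : ∑ a, ∑ b, starRingEnd ℂ (ginv a b) * ω Z (Jmap ⁅η a, σ (ξ b)⁆) = 0 := by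
      refine keysum (fun a b => starRingEnd ℂ (ginv a b)) (fun c a => KP a c)
        (fun d b => starRingEnd ℂ (KQ b d)) (fun a b => ω Z (Jmap ⁅η a, σ (ξ b)⁆))
        (fun c d => ω Z (Jmap ⁅Xf c, σ (Xf d)⁆)) ?_ E1'
      intro a b
      calc ω Z (Jmap ⁅η a, σ (ξ b)⁆)
          = ω Z (Jmap ⁅∑ c, KP a c • Xf c, ∑ d, starRingEnd ℂ (KQ b d) • σ (Xf d)⁆) := by
            rw [hKP, ← hKQ b, σexpand]
        _ = ω Z (Jmap (∑ c, ∑ d, (KP a c * starRingEnd ℂ (KQ b d)) • ⁅Xf c, σ (Xf d)⁆)) := by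
            rw [brexpand]
        _ = ω Z (∑ c, ∑ d, (KP a c * starRingEnd ℂ (KQ b d)) • Jmap ⁅Xf c, σ (Xf d)⁆) := by
            rw [Jmapsum]
            congr 1
            exact Finset.sum_congr rfl fun c _ => Finset.sum_congr rfl fun d _ => JmapSmul _ _
        _ = ∑ c, ∑ d, KP a c * starRingEnd ℂ (KQ b d) * ω Z (Jmap ⁅Xf c, σ (Xf d)⁆) := by
            rw [map_sum]
            refine Finset.sum_congr rfl fun c _ => ?_
            rw [map_sum]
            refine Finset.sum_congr rfl fun d _ => ?_
            rw [_root_.map_smul, smul_eq_mul]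
    have hC2 : ∑ a, ∑ b, starRingEnd ℂ (ginv a b) * ω Z (Jmap ⁅ξ a, σ (η b)⁆) = 0 := by
      refine keysum (fun a b => starRingEnd ℂ (ginv a b)) (fun c a => KQ a c)
        (fun d b => starRingEnd ℂ (KP b d)) (fun a b => ω Z (Jmap ⁅ξ a, σ (η b)⁆))
        (fun c d => ω Z (Jmap ⁅Xf c, σ (Xf d)⁆)) ?_ E2'
      intro a b
      calc ω Z (Jmap ⁅ξ a, σ (η b)⁆)
          = ω Z (Jmap ⁅∑ c, KQ a c • Xf c, ∑ d, starRingEnd ℂ (KP b d) • σ (Xf d)⁆) := by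
            rw [hKQ, ← hKP b, σexpand]
        _ = ω Z (Jmap (∑ c, ∑ d, (KQ a c * starRingEnd ℂ (KP b d)) • ⁅Xf c, σ (Xf d)⁆)) := by
            rw [brexpand]
        _ = ω Z (∑ c, ∑ d, (KQ a c * starRingEnd ℂ (KP b d)) • Jmap ⁅Xf c, σ (Xf d)⁆) := by
            rw [Jmapsum]
            congr 1
            exact Finset.sum_congr rfl fun c _ => Finset.sum_congr rfl fun d _ => JmapSmul _ _
        _ = ∑ c, ∑ d, KQ a c * starRingEnd ℂ (KP b d) * ω Z (Jmap ⁅Xf c, σ (Xf d)⁆) := by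
            rw [map_sum]
            refine Finset.sum_congr rfl fun c _ => ?_
            rw [map_sum]
            refine Finset.sum_congr rfl fun d _ => ?_
            rw [_root_.map_smul, smul_eq_mul]
    calc ∑ a, ∑ b, starRingEnd ℂ (ginv a b) * ω Z (Jmap ⁅Xf a, σ (Xf b)⁆)
        = (∑ a, ∑ b, starRingEnd ℂ (ginv a b) * ω Z (Jmap ⁅η a, σ (ξ b)⁆))
          + ∑ a, ∑ b, starRingEnd ℂ (ginv a b) * ω Z (Jmap ⁅ξ a, σ (η b)⁆) := by
          rw [← Finset.sum_add_distrib]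
          refine Finset.sum_congr rfl fun a _ => ?_
          rw [← Finset.sum_add_distrib]
          refine Finset.sum_congr rfl fun b _ => ?_
          rw [hsplit, mul_add]
      _ = 0 := by rw [hC1, hC2, add_zero]
  -- assemble
  simp only [Finset.sum_add_distrib]
  rw [hA, hB, hC]
  simp
end
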